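/- Let n ≥ 2, λ > 1/(n−1), μ < 0, and let f be the global solution on [0,∞) of f'' + ((n-1)/r)(1+f'²)f' = (1/λ)(1+f'²)²/(r f' − f) with f(0) = μ, f'(0) = 0 and r f'(r) > f(r) for all r ≥ 0. Then for every β with 1 < β < λ(n−1)/(λ(n−1)−1) there exist constants C > 0 and R > 0 such that f(r) ≥ C r^β for all r ≥ R. -/

import Mathlib

open Set Filter intervalIntegral Real

/-- `f` is a global `C¹([0,∞)) ∩ C²((0,∞))` solution of the radially symmetric
self-similar inverse mean curvature flow ODE
`f'' + ((n-1)/r)(1+f'²)f' = (1/λ)(1+f'²)²/(r f' - f)`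
with `f(0) = μ`, `f'(0) = 0` and `r f'(r) - f(r) > 0` on `[0,∞)`. -/
def IsIMCFSolGlobal (n : ℕ) (lam mu : ℝ) (f : ℝ → ℝ) : Prop :=
  ContinuousOn f (Set.Ici 0) ∧
  ContinuousOn (deriv f) (Set.Ici 0) ∧
  (∀ r ∈ Set.Ioi (0 : ℝ), DifferentiableAt ℝ f r) ∧
  (∀ r ∈ Set.Ioi (0 : ℝ), DifferentiableAt ℝ (deriv f) r) ∧
  ContinuousOn (deriv (deriv f)) (Set.Ioi 0) ∧
  (∀ r ∈ Set.Ioi (0 : ℝ),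
    deriv (deriv f) r + ((n : ℝ) - 1) / r * (1 + (deriv f r) ^ 2) * deriv f r
      = 1 / lam * (1 + (deriv f r) ^ 2) ^ 2 / (r * deriv f r - f r)) ∧
  f 0 = mu ∧ deriv f 0 = 0 ∧
  (∀ r ∈ Set.Ici (0 : ℝ), r * deriv f r - f r > 0)

open Topology

/-!
With `w = r f' - f > 0`, the ODE gives successively `f' > 0`, `f'' > 0` for large `r`, and
`f' → ∞`. Put `c = β / (λ (β - 1))`: the bound `β < λ (n - 1) / (λ (n - 1) - 1)` says
`c > n - 1`, and where `r f' ≤ β f` and `f' ≥ β / (c - (n - 1))` the ODE yields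
`r f'' ≥ β f'`. So `r f' - β f` grows at rate at least `f'` while it is nonpositive, hence
eventually `r f' ≥ β f`, which makes `f / r ^ β` nondecreasing.
-/

theorem deriv_nonpos_of_isMinOn_Icc {g : ℝ → ℝ} {a c : ℝ} (hac : a < c)
    (hd : DifferentiableAt ℝ g c) (hmin : IsMinOn g (Icc a c) c) : deriv g c ≤ 0 := by
  have hslope : Tendsto (slope g c) (𝓝[<] c) (𝓝 (deriv g c)) :=
    (hasDerivAt_iff_tendsto_slope.1 hd.hasDerivAt).mono_left
      (nhdsWithin_mono _ fun x hx => ne_of_lt hx)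
  refine le_of_tendsto hslope ?_
  filter_upwards [Ioo_mem_nhdsLT hac] with r hr
  rw [slope_def_field]
  exact div_nonpos_of_nonneg_of_nonpos (sub_nonneg.2 (hmin ⟨hr.1.le, hr.2.le⟩))
    (sub_neg.2 hr.2).le

theorem pos_of_deriv_pos_of_nonpos {g : ℝ → ℝ} {a b : ℝ} (hab : a < b)
    (hc : ContinuousOn g (Icc a b)) (hd : ∀ r ∈ Ioc a b, DifferentiableAt ℝ g r)
    (ha : 0 ≤ g a) (hderiv : ∀ r ∈ Ioc a b, g r ≤ 0 → 0 < deriv g r) : 0 < g b := by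
  by_contra! hb
  obtain ⟨m, hm, hm_min⟩ := isCompact_Icc.exists_isMinOn (nonempty_Icc.2 hab.le) hc
  obtain ⟨c, hac, hcb, hgc, hc_min⟩ :
      ∃ c, a < c ∧ c ≤ b ∧ g c ≤ 0 ∧ IsMinOn g (Icc a c) c := by
    rcases hm.1.eq_or_lt with rfl | ham
    · exact ⟨b, hab, le_rfl, hb, fun r hr => hb.trans (ha.trans (hm_min hr))⟩
    · exact ⟨m, ham, hm.2, (hm_min (right_mem_Icc.2 hab.le)).trans hb,
        hm_min.on_subset (Icc_subset_Icc_right hm.2)⟩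
  exact (hderiv c ⟨hac, hcb⟩ hgc).not_ge
    (deriv_nonpos_of_isMinOn_Icc hac (hd c ⟨hac, hcb⟩) hc_min)

theorem pos_of_deriv_pos_of_eq_zero {g : ℝ → ℝ} {a b : ℝ} (hab : a ≤ b)
    (hc : ContinuousOn g (Icc a b)) (hd : ∀ r ∈ Ioc a b, DifferentiableAt ℝ g r)
    (ha : 0 < g a) (hderiv : ∀ r ∈ Ioc a b, g r = 0 → 0 < deriv g r) : 0 < g b := by
  by_contra! hb
  have hzeros : IsCompact (Icc a b ∩ g ⁻¹' {0}) := isCompact_Icc.of_isClosed_subset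
    (hc.preimage_isClosed_of_isClosed isClosed_Icc isClosed_singleton) inter_subset_left
  obtain ⟨c, ⟨hc_mem, hgc⟩, hc_least⟩ := hzeros.exists_isLeast
    (intermediate_value_Icc' hab hc ⟨hb, ha.le⟩)
  have hac : a < c := hc_mem.1.lt_of_ne (by rintro rfl; exact ha.ne' hgc)
  have hpos : ∀ r ∈ Ico a c, 0 < g r := by
    intro r hr
    by_contra! hr0
    have hrb : r ≤ b := hr.2.le.trans hc_mem.2
    obtain ⟨s, hs, hgs⟩ := intermediate_value_Icc' hr.1
      (hc.mono (Icc_subset_Icc_right hrb)) ⟨hr0, ha.le⟩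
    exact (hs.2.trans_lt hr.2).not_ge (hc_least ⟨⟨hs.1, hs.2.trans hrb⟩, hgs⟩)
  have hc_min : IsMinOn g (Icc a c) c := isMinOn_iff.2 fun r hr => by
    rcases hr.2.eq_or_lt with rfl | hrc
    · exact le_rfl
    · exact (show g c = 0 from hgc) ▸ (hpos r ⟨hr.1, hrc⟩).le
  exact (hderiv c ⟨hac, hc_mem.2⟩ hgc).not_ge
    (deriv_nonpos_of_isMinOn_Icc hac (hd c ⟨hac, hc_mem.2⟩) hc_min)

theorem mul_sub_le_sub_of_le_deriv {g : ℝ → ℝ} {C R : ℝ}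
    (hd : ∀ r ≥ R, DifferentiableAt ℝ g r) (h : ∀ r > R, C ≤ deriv g r)
    {r : ℝ} (hr : R ≤ r) : C * (r - R) ≤ g r - g R :=
  (convex_Ici R).mul_sub_le_image_sub_of_le_deriv
    (fun x hx => (hd x hx).continuousAt.continuousWithinAt)
    (fun x hx => (hd x (interior_subset hx)).differentiableWithinAt)
    (fun x hx => h x (by rwa [interior_Ici] at hx)) R self_mem_Ici r hr hr

theorem hasDerivAt_mul_deriv_sub_mul {f : ℝ → ℝ} {r : ℝ} (β : ℝ)
    (hf : DifferentiableAt ℝ f r) (hf' : DifferentiableAt ℝ (deriv f) r) :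
    HasDerivAt (fun t => t * deriv f t - β * f t)
      (r * deriv (deriv f) r - (β - 1) * deriv f r) r :=
  (((hasDerivAt_id' r).mul hf'.hasDerivAt).sub (hf.hasDerivAt.const_mul β)).congr_deriv (by ring)

theorem tendsto_atTop_of_tendsto_deriv_atTop {g : ℝ → ℝ}
    (hd : ∀ᶠ r in atTop, DifferentiableAt ℝ g r) (hg : Tendsto (deriv g) atTop atTop) :
    Tendsto g atTop atTop := by
  obtain ⟨R, hR⟩ := eventually_atTop.1 (hd.and (hg.eventually_ge_atTop 1))
  refine tendsto_atTop_mono' atTop ?_ (tendsto_atTop_add_const_right _ (g R - R) tendsto_id)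
  filter_upwards [eventually_ge_atTop R] with r hr
  have := mul_sub_le_sub_of_le_deriv (fun s hs => (hR s hs).1) (fun s hs => (hR s hs.le).2) hr
  rw [id]
  linarith

theorem eventually_mul_deriv_sub_le_of_tendsto_deriv {g : ℝ → ℝ} {L ε : ℝ}
    (hd : ∀ᶠ r in atTop, DifferentiableAt ℝ g r) (hg : Tendsto (deriv g) atTop (𝓝 L))
    (hε : 0 < ε) : ∀ᶠ r in atTop, r * deriv g r - g r ≤ ε * r := by
  obtain ⟨R, hR⟩ := eventually_atTop.1 (hd.and (hg.eventually
    (Icc_mem_nhds (show L - ε / 3 < L by linarith) (show L < L + ε / 3 by linarith))))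
  filter_upwards [eventually_ge_atTop R, eventually_ge_atTop 0,
    eventually_ge_atTop (3 * ((L - ε / 3) * R - g R) / ε)] with r hrR hr0 hrK
  have hgrowth := mul_sub_le_sub_of_le_deriv (fun s hs => (hR s hs).1)
    (fun s hs => (hR s hs.le).2.1) hrR
  have hslope : r * deriv g r ≤ r * (L + ε / 3) := mul_le_mul_of_nonneg_left (hR r hrR).2.2 hr0
  have hK : (L - ε / 3) * R - g R ≤ ε / 3 * r := by
    rw [div_le_iff₀' hε] at hrK
    linarith
  nlinarith

theorem eventually_pos_of_le_deriv_of_nonpos {g : ℝ → ℝ} {R c : ℝ} (hc : 0 < c)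
    (hd : ∀ r ≥ R, DifferentiableAt ℝ g r) (h : ∀ r ≥ R, g r ≤ 0 → c ≤ deriv g r) :
    ∀ᶠ r in atTop, 0 < g r := by
  obtain ⟨R₁, hR₁, hg₁⟩ : ∃ R₁ ≥ R, 0 ≤ g R₁ := by
    by_contra! hneg
    have hR : R ≤ R - g R / c :=
      (le_sub_self_iff R).2 (div_nonpos_of_nonpos_of_nonneg (hneg R le_rfl).le hc.le)
    have hgrowth := mul_sub_le_sub_of_le_deriv hd (fun r hr => h r hr.le (hneg r hr.le).le) hR
    have hstep : c * (R - g R / c - R) = -g R := by field_simp; ring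
    linarith [hneg _ hR]
  filter_upwards [eventually_gt_atTop R₁] with r hr
  exact pos_of_deriv_pos_of_nonpos hr
    (fun s hs => (hd s (hR₁.trans hs.1)).continuousAt.continuousWithinAt)
    (fun s hs => hd s (hR₁.trans hs.1.le)) hg₁
    fun s hs hgs => hc.trans_le (h s (hR₁.trans hs.1.le) hgs)

theorem monotoneOn_div_rpow_of_mul_le_mul_deriv {g : ℝ → ℝ} {β R : ℝ} (hR : 0 < R)
    (hd : ∀ r ≥ R, DifferentiableAt ℝ g r) (h : ∀ r ≥ R, β * g r ≤ r * deriv g r) :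
    MonotoneOn (fun t => g t / t ^ β) (Ici R) := by
  have hderiv : ∀ r ≥ R, HasDerivAt (fun t => g t / t ^ β)
      ((deriv g r * r ^ β - g r * (β * r ^ (β - 1))) / (r ^ β) ^ 2) r := fun r hr =>
    (hd r hr).hasDerivAt.div (Real.hasDerivAt_rpow_const (Or.inl (hR.trans_le hr).ne'))
      (Real.rpow_pos_of_pos (hR.trans_le hr) β).ne'
  intro s hs t _ hst
  have hnonneg : ∀ r > s, 0 ≤ deriv (fun t => g t / t ^ β) r := by
    intro r hr
    have hrR : R ≤ r := hs.trans hr.le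
    have hr0 : 0 < r := hR.trans_le hrR
    have hnum : deriv g r * r ^ β - g r * (β * r ^ (β - 1))
        = r ^ β / r * (r * deriv g r - β * g r) := by
      rw [Real.rpow_sub_one hr0.ne']
      field_simp
    rw [(hderiv r hrR).deriv, hnum]
    have hrpow := Real.rpow_pos_of_pos hr0 β
    exact div_nonneg (mul_nonneg (by positivity) (sub_nonneg.2 (h r hrR))) (sq_nonneg _)
  linarith [mul_sub_le_sub_of_le_deriv (fun r hr => (hderiv r (hs.trans hr)).differentiableAt)
    hnonneg hst]

namespace IsIMCFSolGlobal

variable {n : ℕ} {lam mu : ℝ} {f : ℝ → ℝ} {r : ℝ}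

theorem continuousOn_deriv (hf : IsIMCFSolGlobal n lam mu f) :
    ContinuousOn (deriv f) (Ici 0) :=
  hf.2.1

theorem differentiableAt (hf : IsIMCFSolGlobal n lam mu f) (hr : 0 < r) :
    DifferentiableAt ℝ f r :=
  hf.2.2.1 r hr

theorem differentiableAt_deriv (hf : IsIMCFSolGlobal n lam mu f) (hr : 0 < r) :
    DifferentiableAt ℝ (deriv f) r :=
  hf.2.2.2.1 r hr

theorem continuousOn_deriv_deriv (hf : IsIMCFSolGlobal n lam mu f) :
    ContinuousOn (deriv (deriv f)) (Ioi 0) :=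
  hf.2.2.2.2.1

theorem deriv_deriv_eq (hf : IsIMCFSolGlobal n lam mu f) (hr : 0 < r) :
    deriv (deriv f) r = 1 / lam * (1 + deriv f r ^ 2) ^ 2 / (r * deriv f r - f r)
      - ((n : ℝ) - 1) / r * (1 + deriv f r ^ 2) * deriv f r :=
  eq_sub_of_add_eq (hf.2.2.2.2.2.1 r hr)

theorem deriv_zero (hf : IsIMCFSolGlobal n lam mu f) : deriv f 0 = 0 :=
  hf.2.2.2.2.2.2.2.1

theorem mul_deriv_sub_pos (hf : IsIMCFSolGlobal n lam mu f) (hr : 0 ≤ r) :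
    0 < r * deriv f r - f r :=
  hf.2.2.2.2.2.2.2.2 r hr

theorem deriv_pos (hf : IsIMCFSolGlobal n lam mu f) (hlam : 0 < lam) (hn : 1 ≤ n)
    (hr : 0 < r) : 0 < deriv f r := by
  refine pos_of_deriv_pos_of_nonpos hr (hf.continuousOn_deriv.mono Icc_subset_Ici_self)
    (fun s hs => hf.differentiableAt_deriv hs.1) hf.deriv_zero.ge fun s hs hps => ?_
  have hν : (0 : ℝ) ≤ n - 1 := sub_nonneg.2 (by exact_mod_cast hn)
  have hw := hf.mul_deriv_sub_pos hs.1.le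
  have hdrift : ((n : ℝ) - 1) / s * (1 + deriv f s ^ 2) * deriv f s ≤ 0 :=
    mul_nonpos_of_nonneg_of_nonpos (by have := hs.1; positivity) hps
  have hforce : 0 < 1 / lam * (1 + deriv f s ^ 2) ^ 2 / (s * deriv f s - f s) := by positivity
  rw [hf.deriv_deriv_eq hs.1]
  linarith

theorem deriv_deriv_eventuallyEq (hf : IsIMCFSolGlobal n lam mu f) (hr : 0 < r) :
    deriv (deriv f) =ᶠ[𝓝 r] fun s => 1 / lam * (1 + deriv f s ^ 2) ^ 2 / (s * deriv f s - f s)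
      - ((n : ℝ) - 1) / s * (1 + deriv f s ^ 2) * deriv f s :=
  eventually_of_mem (isOpen_Ioi.mem_nhds hr) fun _ hs => hf.deriv_deriv_eq hs

theorem differentiableAt_deriv_deriv (hf : IsIMCFSolGlobal n lam mu f) (hr : 0 < r) :
    DifferentiableAt ℝ (deriv (deriv f)) r := by
  have hdf := hf.differentiableAt hr
  have hdp := hf.differentiableAt_deriv hr
  have hw := (hf.mul_deriv_sub_pos hr.le).ne'
  have hr' := hr.ne'
  refine (hf.deriv_deriv_eventuallyEq hr).differentiableAt_iff.2 ?_
  fun_prop (disch := assumption)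

theorem deriv_deriv_deriv_pos (hf : IsIMCFSolGlobal n lam mu f) (hn : 2 ≤ n) (hr : 0 < r)
    (h0 : deriv (deriv f) r = 0) (hp : 0 < deriv f r) : 0 < deriv (deriv (deriv f)) r := by
  -- at a critical point of `f'` both `f'` and `r f' - f` are stationary, so only the explicit
  -- factor `1 / r` of the ODE contributes to `f'''`
  have hp' : HasDerivAt (deriv f) 0 r := h0 ▸ (hf.differentiableAt_deriv hr).hasDerivAt
  have hw' : HasDerivAt (fun t => t * deriv f t - f t) 0 r := by
    simpa [h0] using hasDerivAt_mul_deriv_sub_mul 1 (hf.differentiableAt hr)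
      (hf.differentiableAt_deriv hr)
  have hforce : HasDerivAt (fun s => 1 / lam * (1 + deriv f s ^ 2) ^ 2 / (s * deriv f s - f s))
      0 r := by
    simpa using ((((hp'.pow 2).const_add 1).pow 2).const_mul (1 / lam)).fun_div hw'
      (hf.mul_deriv_sub_pos hr.le).ne'
  have hdrift : HasDerivAt (fun s => ((n : ℝ) - 1) / s * (1 + deriv f s ^ 2) * deriv f s)
      (-(((n : ℝ) - 1) / r ^ 2 * (1 + deriv f r ^ 2) * deriv f r)) r := by
    simp only [div_eq_mul_inv]
    exact ((((hasDerivAt_inv hr.ne').const_mul _).fun_mul ((hp'.fun_pow 2).const_add 1)).fun_mul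
      hp').congr_deriv (by ring)
  have hν : (0 : ℝ) < n - 1 := sub_pos.2 (by exact_mod_cast hn)
  rw [(hf.deriv_deriv_eventuallyEq hr).deriv_eq, (hforce.fun_sub hdrift).deriv, zero_sub,
    neg_neg]
  positivity

theorem exists_forall_deriv_deriv_pos (hf : IsIMCFSolGlobal n lam mu f) (hlam : 0 < lam)
    (hn : 2 ≤ n) : ∃ a > 0, ∀ r ≥ a, 0 < deriv (deriv f) r := by
  obtain ⟨a, ha, hslope⟩ := exists_deriv_eq_slope (deriv f) zero_lt_one
    (hf.continuousOn_deriv.mono Icc_subset_Ici_self)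
    (fun s hs => (hf.differentiableAt_deriv hs.1).differentiableWithinAt)
  have ha_pos : 0 < deriv (deriv f) a := by
    rw [hslope, hf.deriv_zero, sub_zero, sub_zero, div_one]
    exact hf.deriv_pos hlam (by omega) one_pos
  refine ⟨a, ha.1, fun r hr => pos_of_deriv_pos_of_eq_zero hr
    (hf.continuousOn_deriv_deriv.mono fun s hs => ha.1.trans_le hs.1)
    (fun s hs => hf.differentiableAt_deriv_deriv (ha.1.trans hs.1)) ha_pos fun s hs h0 => ?_⟩
  have hs : 0 < s := ha.1.trans hs.1
  exact hf.deriv_deriv_deriv_pos hn hs h0 (hf.deriv_pos hlam (by omega) hs)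

theorem one_le_mul_deriv_deriv (hf : IsIMCFSolGlobal n lam mu f) (hlam : 0 < lam)
    (hn : 1 ≤ n) {ε M : ℝ} (hM : 0 ≤ M) (hεM : lam * ε * (((n : ℝ) - 1) * M + 1) ≤ 1)
    (hr : 0 < r) (hw_le : r * deriv f r - f r ≤ ε * r) (hp_le : deriv f r ≤ M) :
    1 ≤ r * deriv (deriv f) r := by
  have hν : (0 : ℝ) ≤ n - 1 := sub_nonneg.2 (by exact_mod_cast hn)
  have hw : 0 < r * deriv f r - f r := hf.mul_deriv_sub_pos hr.le
  have hode : r * deriv (deriv f) r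
      = r / (lam * (r * deriv f r - f r)) * (1 + deriv f r ^ 2) ^ 2
        - ((n : ℝ) - 1) * (1 + deriv f r ^ 2) * deriv f r := by
    rw [hf.deriv_deriv_eq hr]
    field_simp
  rw [hode]
  generalize deriv f r = p at *
  generalize r * p - f r = w at *
  set K := ((n : ℝ) - 1) * M + 1
  have hK : 1 ≤ K := by have := mul_nonneg hν hM; linarith
  have hforce : K ≤ r / (lam * w) := by
    rw [le_div_iff₀ (by positivity)]
    nlinarith [mul_le_mul_of_nonneg_left hw_le (by positivity : 0 ≤ lam * K)]
  have hdrift : ((n : ℝ) - 1) * (1 + p ^ 2) * p ≤ (K - 1) * (1 + p ^ 2) := by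
    have := mul_le_mul_of_nonneg_left hp_le (by positivity : 0 ≤ ((n : ℝ) - 1) * (1 + p ^ 2))
    linarith
  have hsq : 1 + p ^ 2 ≤ (1 + p ^ 2) ^ 2 := by nlinarith [sq_nonneg p]
  nlinarith [mul_le_mul_of_nonneg_right hforce (by positivity : 0 ≤ (1 + p ^ 2) ^ 2),
    mul_le_mul_of_nonneg_left hsq (by linarith : 0 ≤ K), sq_nonneg p]

theorem not_tendsto_deriv_nhds (hf : IsIMCFSolGlobal n lam mu f) (hlam : 0 < lam)
    (hn : 1 ≤ n) (L : ℝ) : ¬ Tendsto (deriv f) atTop (𝓝 L) := by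
  intro hL
  have hν : (0 : ℝ) ≤ n - 1 := sub_nonneg.2 (by exact_mod_cast hn)
  set M := |L| + 1
  set ε := min (1 / 2) (1 / (lam * (((n : ℝ) - 1) * M + 1)))
  have hε : 0 < ε := by positivity
  have hεM : lam * ε * (((n : ℝ) - 1) * M + 1) ≤ 1 := by
    have := min_le_right (1 / 2 : ℝ) (1 / (lam * (((n : ℝ) - 1) * M + 1)))
    rw [le_div_iff₀ (by positivity)] at this
    linarith
  -- once `w = r f' - f ≤ ε r`, the ODE forces `w' = r f'' ≥ 1`, contradicting `w ≤ r / 2`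
  obtain ⟨R, hR⟩ := eventually_atTop.1 ((eventually_gt_atTop 0).and
    ((eventually_mul_deriv_sub_le_of_tendsto_deriv
      ((eventually_gt_atTop 0).mono fun _ hr => hf.differentiableAt hr) hL hε).and
    (hL.eventually (eventually_le_nhds (show L < M by linarith [le_abs_self L])))))
  have hR0 : 0 < R := (hR R le_rfl).1
  have hw_deriv : ∀ r ≥ R, HasDerivAt (fun t => t * deriv f t - f t)
      (r * deriv (deriv f) r) r := fun r hr => by
    simpa using hasDerivAt_mul_deriv_sub_mul 1 (hf.differentiableAt (hR r hr).1)
      (hf.differentiableAt_deriv (hR r hr).1)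
  have hgrowth := mul_sub_le_sub_of_le_deriv (fun r hr => (hw_deriv r hr).differentiableAt)
    (fun r hr => (hw_deriv r hr.le).deriv ▸
      hf.one_le_mul_deriv_deriv hlam hn (by positivity) hεM (hR r hr.le).1 (hR r hr.le).2.1
        (hR r hr.le).2.2)
    (r := 2 * R) (by linarith)
  have hw_small := (hR (2 * R) (by linarith)).2.1
  have hwR := hf.mul_deriv_sub_pos hR0.le
  have hε2 : ε ≤ 1 / 2 := min_le_left _ _
  nlinarith

theorem tendsto_deriv_atTop (hf : IsIMCFSolGlobal n lam mu f) (hlam : 0 < lam) (hn : 2 ≤ n) :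
    Tendsto (deriv f) atTop atTop := by
  obtain ⟨a, ha, hpos⟩ := hf.exists_forall_deriv_deriv_pos hlam hn
  have hmono : MonotoneOn (deriv f) (Ici a) :=
    monotoneOn_of_deriv_nonneg (convex_Ici a)
      (fun r hr => (hf.differentiableAt_deriv (ha.trans_le hr)).continuousAt.continuousWithinAt)
      (fun r hr =>
        (hf.differentiableAt_deriv (ha.trans_le (interior_subset hr))).differentiableWithinAt)
      (fun r hr => (hpos r (interior_subset hr)).le)
  have hmono' : Monotone fun t => deriv f (max a t) := fun s t hst =>
    hmono (le_max_left a s) (le_max_left a t) (max_le_max le_rfl hst)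
  have heq : (fun t => deriv f (max a t)) =ᶠ[atTop] deriv f :=
    (eventually_ge_atTop a).mono fun t ht => by simp only [max_eq_right ht]
  by_cases hB : BddAbove (range fun t => deriv f (max a t))
  · exact absurd ((tendsto_atTop_ciSup hmono' hB).congr' heq)
      (hf.not_tendsto_deriv_nhds hlam (by omega) _)
  · exact (tendsto_atTop_atTop_of_monotone' hmono' hB).congr' heq

theorem mul_deriv_le_mul_deriv_deriv (hf : IsIMCFSolGlobal n lam mu f) (hlam : 0 < lam)
    (hn : 1 ≤ n) {β c : ℝ} (hβ : 1 < β) (hc : lam * (β - 1) * c ≤ β) (hr : 0 < r)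
    (hq : r * deriv f r ≤ β * f r) (hp : β ≤ (c - ((n : ℝ) - 1)) * deriv f r) :
    β * deriv f r ≤ r * deriv (deriv f) r := by
  have hν : (0 : ℝ) ≤ n - 1 := sub_nonneg.2 (by exact_mod_cast hn)
  have hP : 0 < deriv f r := hf.deriv_pos hlam hn hr
  have hw : 0 < r * deriv f r - f r := hf.mul_deriv_sub_pos hr.le
  have hode : lam * (r * deriv f r - f r) * (r * deriv (deriv f) r) = r * (1 + deriv f r ^ 2) ^ 2
      - lam * (r * deriv f r - f r) * ((n : ℝ) - 1) * (1 + deriv f r ^ 2) * deriv f r := by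
    rw [hf.deriv_deriv_eq hr]
    field_simp
  generalize deriv f r = P at *
  generalize r * deriv (deriv f) r = D at *
  have hq' : β * (r * P - f r) ≤ (β - 1) * (r * P) := by linarith
  generalize r * P - f r = w at *
  have hcν : 0 < c - ((n : ℝ) - 1) := pos_of_mul_pos_left (by linarith) hP.le
  -- `r f' ≤ β f` bounds `w = r f' - f` by `(1 - 1/β) r f'`, hence by `r f' / (λ c)`
  have hA : lam * c * w ≤ r * P := by
    have := mul_le_mul_of_nonneg_left hq' (by nlinarith : 0 ≤ lam * c)
    nlinarith [mul_le_mul_of_nonneg_right hc (by positivity : 0 ≤ r * P)]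
  have hP3 : P ^ 3 ≤ (1 + P ^ 2) ^ 2 := by nlinarith [sq_nonneg (P ^ 2 - P), sq_nonneg P]
  have key : lam * w * P * (β * P) ≤ lam * w * P * D := by
    calc lam * w * P * (β * P) = lam * w * (β * P ^ 2) := by ring
      _ ≤ lam * w * ((c - ((n : ℝ) - 1)) * (1 + P ^ 2) ^ 2) := by
        refine mul_le_mul_of_nonneg_left ?_ (by positivity)
        nlinarith [mul_le_mul_of_nonneg_right hp (sq_nonneg P),
          mul_le_mul_of_nonneg_left hP3 hcν.le]
      _ ≤ (1 + P ^ 2) * (lam * c * w * (1 + P ^ 2) - lam * w * ((n : ℝ) - 1) * P ^ 2) := by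
        nlinarith [mul_nonneg (mul_nonneg hlam.le hw.le) hν, sq_nonneg P]
      _ ≤ (1 + P ^ 2) * (r * P * (1 + P ^ 2) - lam * w * ((n : ℝ) - 1) * P ^ 2) := by
        gcongr
      _ = lam * w * P * D := by linear_combination -P * hode
  exact le_of_mul_le_mul_left key (by positivity)

theorem eventually_mul_le_mul_deriv (hf : IsIMCFSolGlobal n lam mu f) (hlam : 0 < lam)
    (hn : 2 ≤ n) {β c : ℝ} (hβ : 1 < β) (hc : lam * (β - 1) * c ≤ β)
    (hνc : (n : ℝ) - 1 < c) :
    ∀ᶠ r in atTop, β * f r ≤ r * deriv f r := by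
  have hp := hf.tendsto_deriv_atTop hlam hn
  obtain ⟨R, hR⟩ := eventually_atTop.1 ((eventually_gt_atTop 0).and
    ((hp.eventually_ge_atTop 1).and (hp.eventually_ge_atTop (β / (c - ((n : ℝ) - 1))))))
  refine (eventually_pos_of_le_deriv_of_nonpos (R := R) one_pos
    (fun r hr => (hasDerivAt_mul_deriv_sub_mul β (hf.differentiableAt (hR r hr).1)
      (hf.differentiableAt_deriv (hR r hr).1)).differentiableAt) fun r hr hneg => ?_).mono
    fun r hr => by linarith
  obtain ⟨hr0, hp1, hpc⟩ := hR r hr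
  rw [(hasDerivAt_mul_deriv_sub_mul β (hf.differentiableAt hr0)
    (hf.differentiableAt_deriv hr0)).deriv]
  have := hf.mul_deriv_le_mul_deriv_deriv hlam (by omega) hβ hc hr0 (by linarith)
    ((div_le_iff₀' (sub_pos.2 hνc)).1 hpc)
  linarith

end IsIMCFSolGlobal

theorem imcf_polynomial_lower_bound_general (n : ℕ) (hn : 2 ≤ n)
    (lam mu : ℝ) (hlam : 1 / ((n : ℝ) - 1) < lam)
    (f : ℝ → ℝ) (hf : IsIMCFSolGlobal n lam mu f) :
    ∀ β : ℝ, 1 < β → β < lam * ((n : ℝ) - 1) / (lam * ((n : ℝ) - 1) - 1) →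
      ∃ C > (0 : ℝ), ∃ R > (0 : ℝ), ∀ r : ℝ, R ≤ r → C * r ^ β ≤ f r := by
  intro β hβ hβα
  have hν : (0 : ℝ) < n - 1 := sub_pos.2 (by exact_mod_cast hn)
  have hlam0 : 0 < lam := (one_div_pos.2 hν).trans hlam
  have hlamν : 1 < lam * (n - 1) := by rwa [div_lt_iff₀ hν] at hlam
  set c := β / (lam * (β - 1))
  have hc : lam * (β - 1) * c = β := mul_div_cancel₀ _ (by nlinarith)
  have hνc : (n : ℝ) - 1 < c := by
    rw [lt_div_iff₀ (by linarith)] at hβα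
    rw [lt_div_iff₀ (by nlinarith)]
    linarith
  have hf_pos := (tendsto_atTop_of_tendsto_deriv_atTop
    ((eventually_gt_atTop 0).mono fun _ hr => hf.differentiableAt hr)
    (hf.tendsto_deriv_atTop hlam0 hn)).eventually_gt_atTop 0
  obtain ⟨R, hR⟩ := eventually_atTop.1 ((eventually_gt_atTop 0).and
    (hf_pos.and (hf.eventually_mul_le_mul_deriv hlam0 hn hβ hc.le hνc)))
  have hR0 : 0 < R := (hR R le_rfl).1
  have hmono := monotoneOn_div_rpow_of_mul_le_mul_deriv hR0
    (fun r hr => hf.differentiableAt (hR r hr).1) fun r hr => (hR r hr).2.2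
  refine ⟨f R / R ^ β, div_pos (hR R le_rfl).2.1 (Real.rpow_pos_of_pos hR0 β), R, hR0,
    fun r hr => ?_⟩
  rw [← le_div_iff₀ (Real.rpow_pos_of_pos (hR0.trans_le hr) β)]
  exact hmono self_mem_Ici hr hr

/-- polynomial lower growth bound `f(r) ≥ C r^β` for any
`1 < β < λ(n−1)/(λ(n−1)−1)`. -/
theorem imcf_polynomial_lower_bound (n : ℕ) (hn : 2 ≤ n)
    (lam mu : ℝ) (hlam : 1 / ((n : ℝ) - 1) < lam) (hmu : mu < 0)
    (f : ℝ → ℝ) (hf : IsIMCFSolGlobal n lam mu f) :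
    ∀ β : ℝ, 1 < β → β < lam * ((n : ℝ) - 1) / (lam * ((n : ℝ) - 1) - 1) →
      ∃ C > (0 : ℝ), ∃ R > (0 : ℝ), ∀ r : ℝ, R ≤ r → C * r ^ β ≤ f r :=
  imcf_polynomial_lower_bound_general n hn lam mu hlam f hf
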